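/- Let a, σ > 0, b ≥ 0, τ > 0, let t₀ ≤ T − τ, and let α : [t₀,T] → ℝ be a continuous function. Then there exists a unique continuous function β : [t₀,T] → ℝ such that β(T) = 1, β is differentiable on [T−τ, T] with β′(t) = (σ²·α(t) + a)·β(t) there, and β is differentiable on [t₀, T−τ] with β′(t) = (σ²·α(t) + a)·β(t) − b·β(t+τ) there (one-sided derivatives at the endpoints and at T−τ). Moreover β(t) > 0 for all t ∈ [t₀,T], and β satisfies the explicit formulas: β(t) = exp( − ∫ₜ^T (σ²·α(u) + a) du ) for t ∈ [T−τ, T], and β(t) = exp( − ∫ₜ^T (σ²·α(u) + a) du ) + b·∫ₜ^{T−τ} exp( − ∫ₜ^s (σ²·α(u) + a) du )·β(s+τ) ds for t ∈ [t₀, T−τ]. -/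

import Mathlib

/-!
Method of steps. On `[T - τ, T]` the equation is the scalar linear ODE `β' = gβ`, with
`g = σ²α + a`, and on each earlier interval of length `τ` it is a linear ODE whose forcing term
`-b β(· + τ)` is already known, solved by variation of constants. The map `delayStep` performs this
solution step for a given forcing function `f`; its `n`-th iterate is correct on `[T - nτ, ∞)`,
so enough iterations reach a fixed point on `[t₀, ∞)`, which is the solution. Since `b ≥ 0`, the
step maps nonnegative functions to positive ones. For uniqueness, the difference of two solutions
vanishes on `[T - kτ, T]` by induction on `k`: on the next interval to the left it solves `δ' = gδ`
with `δ = 0` at the right end, and `δ · exp (∫ g)` has zero right derivative.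
-/

open Set Real

/-- The linear delayed system satisfied by the w-derivative β of the Riccati
coefficient in the fixed delay CIR term structure: β is continuous on [t₀,T],
β(T) = 1, β′ = (σ²α + a)β on [T−τ,T] and β′ = (σ²α + a)β − b·β(·+τ) on [t₀,T−τ]
(one-sided derivatives at the endpoints and at T−τ). -/
def IsBetaSol (a b σ τ t₀ T : ℝ) (α β : ℝ → ℝ) : Prop :=
  ContinuousOn β (Set.Icc t₀ T) ∧ β T = 1 ∧
  (∀ t ∈ Set.Icc (T - τ) T, HasDerivWithinAt β
    ((σ ^ 2 * α t + a) * β t) (Set.Icc (T - τ) T) t) ∧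
  (∀ t ∈ Set.Icc t₀ (T - τ), HasDerivWithinAt β
    ((σ ^ 2 * α t + a) * β t - b * β (t + τ)) (Set.Icc t₀ (T - τ)) t)

theorem ContinuousOn.exists_continuous_eqOn_Icc {f : ℝ → ℝ} {a b : ℝ}
    (hf : ContinuousOn f (Icc a b)) (hab : a ≤ b) :
    ∃ g : ℝ → ℝ, Continuous g ∧ EqOn g f (Icc a b) :=
  ⟨IccExtend hab ((Icc a b).domRestrict f), hf.domRestrict.Icc_extend',
    fun _ hx => IccExtend_of_mem _ _ hx⟩

theorem Continuous.hasDerivAt_integral_left {g : ℝ → ℝ} (hg : Continuous g) (c t : ℝ) :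
    HasDerivAt (fun t => ∫ u in t..c, g u) (-g t) t :=
  intervalIntegral.integral_hasDerivAt_left (hg.intervalIntegrable t c)
    (hg.stronglyMeasurableAtFilter _ _) hg.continuousAt

theorem Continuous.continuous_integral_left {g : ℝ → ℝ} (hg : Continuous g) (c : ℝ) :
    Continuous fun t => ∫ u in t..c, g u :=
  continuous_iff_continuousAt.2 fun t => (hg.hasDerivAt_integral_left c t).continuousAt

theorem eqOn_zero_of_hasDerivWithinAt_Ici_mul {g δ : ℝ → ℝ} {c d : ℝ} (hg : Continuous g)
    (hδ : ContinuousOn δ (Icc c d))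
    (hderiv : ∀ x ∈ Ico c d, HasDerivWithinAt δ (g x * δ x) (Ici x) x) (hd : δ d = 0) :
    EqOn δ 0 (Icc c d) := by
  intro x hx
  set F : ℝ → ℝ := fun x => δ x * exp (∫ u in x..d, g u) with hF
  have hconst : ∀ y ∈ Icc c d, F y = F c := by
    refine constant_of_has_deriv_right_zero
      (hδ.mul (hg.continuous_integral_left d).rexp.continuousOn) fun y hy => ?_
    have hexp := ((hg.hasDerivAt_integral_left d y).exp).hasDerivWithinAt (s := Ici y)
    exact ((hderiv y hy).mul hexp).congr_deriv (by ring)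
  have hFx : F x = 0 := by
    rw [hconst x hx, ← hconst d ⟨hx.1.trans hx.2, le_rfl⟩, hF]
    simp [hd]
  simpa [hF, exp_ne_zero] using hFx

section delayStep

variable (b τ T : ℝ) (g : ℝ → ℝ)

/-- Variation of constants for `β' = gβ - b f(· + τ)`, `β(T) = 1`, solved on `(-∞, T - τ]`;
the `min` makes it the homogeneous solution `exp (-∫ₜᵀ g)` on `[T - τ, ∞)`. -/
noncomputable def delayStep (f : ℝ → ℝ) (t : ℝ) : ℝ :=
  exp (-∫ u in t..T, g u) *
    (1 + b * ∫ s in (min t (T - τ))..(T - τ), exp (∫ u in s..T, g u) * f (s + τ))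

variable {b τ T g}

theorem delayStep_of_le {f : ℝ → ℝ} {t : ℝ} (ht : T - τ ≤ t) :
    delayStep b τ T g f t = exp (-∫ u in t..T, g u) := by
  simp [delayStep, min_eq_right ht]

theorem delayStep_eq_of_le (hg : Continuous g) (f : ℝ → ℝ) {t : ℝ} (ht : t ≤ T - τ) :
    delayStep b τ T g f t = exp (-∫ u in t..T, g u) +
      b * ∫ s in t..(T - τ), exp (-∫ u in t..s, g u) * f (s + τ) := by
  rw [delayStep, min_eq_left ht, mul_add, mul_one, mul_left_comm,
    ← intervalIntegral.integral_const_mul]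
  congr 2
  refine intervalIntegral.integral_congr fun s _ => ?_
  have hadd : (∫ u in t..s, g u) + ∫ u in s..T, g u = ∫ u in t..T, g u :=
    intervalIntegral.integral_add_adjacent_intervals (hg.intervalIntegrable t s)
      (hg.intervalIntegrable s T)
  rw [← mul_assoc, ← exp_add, ← hadd]
  congr 2
  ring

theorem delayStep_pos (hb : 0 ≤ b) {f : ℝ → ℝ} (hf : ∀ t, 0 ≤ f t) (t : ℝ) :
    0 < delayStep b τ T g f t := by
  have hI : 0 ≤ ∫ s in (min t (T - τ))..(T - τ), exp (∫ u in s..T, g u) * f (s + τ) :=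
    intervalIntegral.integral_nonneg (min_le_right _ _) fun s _ =>
      mul_nonneg (exp_pos _).le (hf _)
  unfold delayStep
  positivity

theorem continuous_delayStep (hg : Continuous g) {f : ℝ → ℝ} (hf : Continuous f) :
    Continuous (delayStep b τ T g f) := by
  have hφ : Continuous fun s => exp (∫ u in s..T, g u) * f (s + τ) :=
    (hg.continuous_integral_left T).rexp.mul (hf.comp (continuous_add_const τ))
  exact (hg.continuous_integral_left T).neg.rexp.mul (continuous_const.add
    (continuous_const.mul ((hφ.continuous_integral_left _).comp
      (continuous_id.min continuous_const))))

theorem eqOn_delayStep {f f' : ℝ → ℝ} {c : ℝ} (h : EqOn f f' (Ici c)) :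
    EqOn (delayStep b τ T g f) (delayStep b τ T g f') (Ici (c - τ)) := by
  intro t ht
  rcases le_total t (T - τ) with htT | htT
  · simp only [delayStep, min_eq_left htT]
    congr 3
    refine intervalIntegral.integral_congr fun s hs => ?_
    rw [uIcc_of_le htT] at hs
    rw [h (show c ≤ s + τ by linarith [mem_Ici.1 ht, hs.1])]
  · rw [delayStep_of_le htT, delayStep_of_le htT]

theorem eqOn_delayStep_iterate {f f' : ℝ → ℝ} {c : ℝ} (h : EqOn f f' (Ici c)) (n : ℕ) :
    EqOn ((delayStep b τ T g)^[n] f) ((delayStep b τ T g)^[n] f') (Ici (c - n * τ)) := by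
  induction n with
  | zero => simpa using h
  | succ n ih =>
    rw [Function.iterate_succ_apply', Function.iterate_succ_apply']
    convert eqOn_delayStep ih using 2
    push_cast
    ring

theorem hasDerivWithinAt_delayStep_Ici (hg : Continuous g) (f : ℝ → ℝ) {t : ℝ}
    (ht : T - τ ≤ t) :
    HasDerivWithinAt (delayStep b τ T g f) (g t * delayStep b τ T g f t) (Ici (T - τ)) t := by
  have hE := ((hg.hasDerivAt_integral_left T t).fun_neg.exp).hasDerivWithinAt (s := Ici (T - τ))
  rw [delayStep_of_le ht]
  exact (hE.congr (fun x hx => delayStep_of_le hx) (delayStep_of_le ht)).congr_deriv (by ring)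

theorem hasDerivWithinAt_delayStep_Iic (hg : Continuous g) {f : ℝ → ℝ} (hf : Continuous f)
    {t : ℝ} (ht : t ≤ T - τ) :
    HasDerivWithinAt (delayStep b τ T g f) (g t * delayStep b τ T g f t - b * f (t + τ))
      (Iic (T - τ)) t := by
  set φ : ℝ → ℝ := fun s => exp (∫ u in s..T, g u) * f (s + τ) with hφ
  have hφc : Continuous φ :=
    (hg.continuous_integral_left T).rexp.mul (hf.comp (continuous_add_const τ))
  have heq : EqOn (delayStep b τ T g f)
      (fun x => exp (-∫ u in x..T, g u) * (1 + b * ∫ s in x..(T - τ), φ s)) (Iic (T - τ)) :=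
    fun x hx => by simp only [delayStep, min_eq_left (mem_Iic.1 hx), hφ]
  have hd := ((hg.hasDerivAt_integral_left T t).fun_neg.exp).mul
    (((hφc.hasDerivAt_integral_left (T - τ) t).const_mul b).const_add 1)
  have hinv : exp (-∫ u in t..T, g u) * exp (∫ u in t..T, g u) = 1 := by
    rw [← exp_add, neg_add_cancel, exp_zero]
  refine (hd.hasDerivWithinAt.congr heq (heq ht)).congr_deriv ?_
  rw [heq ht]
  linear_combination (-b * f (t + τ)) * hinv

theorem exists_continuous_pos_eqOn_delayStep (hg : Continuous g) (hb : 0 ≤ b) (hτ : 0 < τ)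
    (t₀ : ℝ) :
    ∃ β : ℝ → ℝ, Continuous β ∧ (∀ t, 0 < β t) ∧ EqOn (delayStep b τ T g β) β (Ici t₀) := by
  set Φ := delayStep b τ T g
  obtain ⟨n, hn⟩ := exists_nat_ge ((T - τ - t₀) / τ)
  refine ⟨Φ^[n] (Φ 0), ?_, ?_, ?_⟩
  · exact Function.Iterate.rec Continuous (continuous_delayStep hg continuous_const)
      (fun _ => continuous_delayStep hg) n
  · exact Function.Iterate.rec (fun f : ℝ → ℝ => ∀ t, 0 < f t) (delayStep_pos hb fun _ => le_rfl)
      (fun _ hf => delayStep_pos hb fun t => (hf t).le) n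
  · have h : EqOn (Φ^[n] (Φ (Φ 0))) (Φ^[n] (Φ 0)) (Ici (T - τ - n * τ)) :=
      eqOn_delayStep_iterate (fun t ht => by simp only [Φ, delayStep_of_le (mem_Ici.1 ht)]) n
    rw [← Function.iterate_succ_apply, Function.iterate_succ_apply'] at h
    exact h.mono (Ici_subset_Ici.2 (by rw [div_le_iff₀ hτ] at hn; linarith))

end delayStep

section IsBetaSol

variable {a b σ τ t₀ T : ℝ} {α g : ℝ → ℝ}

theorem isBetaSol_of_eqOn_delayStep (hg : Continuous g)
    (hgα : EqOn g (fun u => σ ^ 2 * α u + a) (Icc t₀ T)) (hτ : 0 ≤ τ) (ht₀ : t₀ ≤ T - τ)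
    {β : ℝ → ℝ} (hβ : Continuous β) (hfix : EqOn (delayStep b τ T g β) β (Icc t₀ T)) :
    IsBetaSol a b σ τ t₀ T α β := by
  have hT : t₀ ≤ T := by linarith
  refine ⟨hβ.continuousOn, ?_, fun t ht => ?_, fun t ht => ?_⟩
  · rw [← hfix (right_mem_Icc.2 hT), delayStep_of_le (by linarith)]
    simp
  · have htI : t ∈ Icc t₀ T := ⟨ht₀.trans ht.1, ht.2⟩
    rw [← show g t = σ ^ 2 * α t + a from hgα htI, ← hfix htI]
    exact ((hasDerivWithinAt_delayStep_Ici hg β ht.1).mono Icc_subset_Ici_self).congr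
      (fun x hx => (hfix ⟨ht₀.trans hx.1, hx.2⟩).symm) (hfix htI).symm
  · have htI : t ∈ Icc t₀ T := ⟨ht.1, ht.2.trans (by linarith)⟩
    rw [← show g t = σ ^ 2 * α t + a from hgα htI, ← hfix htI]
    exact ((hasDerivWithinAt_delayStep_Iic hg hβ ht.2).mono Icc_subset_Iic_self).congr
      (fun x hx => (hfix ⟨hx.1, hx.2.trans (by linarith)⟩).symm) (hfix htI).symm

theorem IsBetaSol.hasDerivWithinAt_sub (hgα : EqOn g (fun u => σ ^ 2 * α u + a) (Icc t₀ T))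
    {β₁ β₂ : ℝ → ℝ} (h₁ : IsBetaSol a b σ τ t₀ T α β₁) (h₂ : IsBetaSol a b σ τ t₀ T α β₂)
    {x : ℝ} (hx : x ∈ Ico t₀ T) (hshift : x < T - τ → β₁ (x + τ) = β₂ (x + τ)) :
    HasDerivWithinAt (β₁ - β₂) (g x * (β₁ - β₂) x) (Ici x) x := by
  rw [show g x = σ ^ 2 * α x + a from hgα (Ico_subset_Icc_self hx)]
  rcases le_or_gt (T - τ) x with hxτ | hxτ
  · have hd := (h₁.2.2.1 x ⟨hxτ, hx.2.le⟩).sub (h₂.2.2.1 x ⟨hxτ, hx.2.le⟩)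
    exact (hd.mono_of_mem_nhdsWithin (Icc_mem_nhdsGE_of_mem ⟨hxτ, hx.2⟩)).congr_deriv
      (by simp only [Pi.sub_apply]; ring)
  · have hd := (h₁.2.2.2 x ⟨hx.1, hxτ.le⟩).sub (h₂.2.2.2 x ⟨hx.1, hxτ.le⟩)
    exact (hd.mono_of_mem_nhdsWithin (Icc_mem_nhdsGE_of_mem ⟨hx.1, hxτ⟩)).congr_deriv
      (by simp only [Pi.sub_apply, hshift hxτ]; ring)

theorem IsBetaSol.eqOn (hg : Continuous g) (hgα : EqOn g (fun u => σ ^ 2 * α u + a) (Icc t₀ T))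
    (hτ : 0 < τ) {β₁ β₂ : ℝ → ℝ} (h₁ : IsBetaSol a b σ τ t₀ T α β₁)
    (h₂ : IsBetaSol a b σ τ t₀ T α β₂) : EqOn β₁ β₂ (Icc t₀ T) := by
  suffices key : ∀ k : ℕ, ∀ t ∈ Icc t₀ T, T - k * τ ≤ t → β₁ t = β₂ t by
    intro t ht
    obtain ⟨k, hk⟩ := exists_nat_ge ((T - t₀) / τ)
    exact key k t ht (by rw [div_le_iff₀ hτ] at hk; linarith [ht.1])
  intro k
  induction k with
  | zero =>
    intro t ht hTt
    rw [show t = T by push_cast at hTt; linarith [ht.2], h₁.2.1, h₂.2.1]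
  | succ k ih =>
    intro t ht hkt
    rcases le_or_gt (T - k * τ) t with h | h
    · exact ih t ht h
    have hkτ : 0 ≤ (k : ℝ) * τ := by positivity
    have hd : T - k * τ ∈ Icc t₀ T := ⟨ht.1.trans h.le, by linarith⟩
    have hδ := eqOn_zero_of_hasDerivWithinAt_Ici_mul hg
      ((h₁.1.sub h₂.1).mono (Icc_subset_Icc ht.1 hd.2))
      (fun x hx => h₁.hasDerivWithinAt_sub hgα h₂ ⟨ht.1.trans hx.1, hx.2.trans_le hd.2⟩
        fun hxτ => ih (x + τ) ⟨by linarith [hx.1, ht.1], by linarith⟩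
          (by push_cast at hkt; linarith [hx.1]))
      (sub_eq_zero.2 (ih _ hd le_rfl)) ⟨le_rfl, h.le⟩
    exact sub_eq_zero.1 hδ

end IsBetaSol

theorem beta_linear_delayed_system_general
    (a b σ τ t₀ T : ℝ) (hb : 0 ≤ b) (hτ : 0 < τ)
    (ht₀ : t₀ ≤ T - τ)
    (α : ℝ → ℝ) (hα : ContinuousOn α (Set.Icc t₀ T)) :
    ∃ β : ℝ → ℝ,
      IsBetaSol a b σ τ t₀ T α β ∧
      (∀ β' : ℝ → ℝ, IsBetaSol a b σ τ t₀ T α β' →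
        ∀ t ∈ Set.Icc t₀ T, β' t = β t) ∧
      (∀ t ∈ Set.Icc t₀ T, 0 < β t) ∧
      (∀ t ∈ Set.Icc (T - τ) T,
        β t = Real.exp (-∫ u in t..T, (σ ^ 2 * α u + a))) ∧
      (∀ t ∈ Set.Icc t₀ (T - τ),
        β t = Real.exp (-∫ u in t..T, (σ ^ 2 * α u + a)) +
          b * ∫ s in t..(T - τ),
            Real.exp (-∫ u in t..s, (σ ^ 2 * α u + a)) * β (s + τ)) := by
  have hT : t₀ ≤ T := by linarith
  obtain ⟨g, hg, hgα⟩ :=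
    ((continuousOn_const.mul hα).add continuousOn_const).exists_continuous_eqOn_Icc hT
  obtain ⟨β, hβ, hβpos, hfix⟩ := exists_continuous_pos_eqOn_delayStep (b := b) (T := T) hg hb hτ t₀
  replace hfix : EqOn (delayStep b τ T g β) β (Icc t₀ T) := hfix.mono Icc_subset_Ici_self
  have hint : ∀ x ∈ Icc t₀ T, ∀ y ∈ Icc t₀ T,
      ∫ u in x..y, g u = ∫ u in x..y, (σ ^ 2 * α u + a) := fun x hx y hy =>
    intervalIntegral.integral_congr (hgα.mono (uIcc_subset_Icc hx hy))
  have hsol := isBetaSol_of_eqOn_delayStep hg hgα hτ.le ht₀ hβ hfix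
  refine ⟨β, hsol, fun β' hβ' => hβ'.eqOn hg hgα hτ hsol, fun t _ => hβpos t,
    fun t ht => ?_, fun t ht => ?_⟩
  · have htI : t ∈ Icc t₀ T := ⟨ht₀.trans ht.1, ht.2⟩
    rw [← hfix htI, delayStep_of_le ht.1, hint t htI T (right_mem_Icc.2 hT)]
  · have htI : t ∈ Icc t₀ T := ⟨ht.1, ht.2.trans (by linarith)⟩
    rw [← hfix htI, delayStep_eq_of_le hg β ht.2, hint t htI T (right_mem_Icc.2 hT)]
    congr 2
    refine intervalIntegral.integral_congr fun s hs => ?_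
    rw [uIcc_of_le ht.2] at hs
    rw [hint t htI s ⟨ht.1.trans hs.1, hs.2.trans (by linarith)⟩]

/-- existence, uniqueness, positivity and explicit formulas for the
solution of the linear delayed equation β′ = (σ²α + a)β (resp. minus b·β(·+τ))
with β(T) = 1. -/
theorem beta_linear_delayed_system
    (a b σ τ t₀ T : ℝ) (ha : 0 < a) (hσ : 0 < σ) (hb : 0 ≤ b) (hτ : 0 < τ)
    (ht₀ : t₀ ≤ T - τ)
    (α : ℝ → ℝ) (hα : ContinuousOn α (Set.Icc t₀ T)) :
    ∃ β : ℝ → ℝ,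
      IsBetaSol a b σ τ t₀ T α β ∧
      (∀ β' : ℝ → ℝ, IsBetaSol a b σ τ t₀ T α β' →
        ∀ t ∈ Set.Icc t₀ T, β' t = β t) ∧
      (∀ t ∈ Set.Icc t₀ T, 0 < β t) ∧
      (∀ t ∈ Set.Icc (T - τ) T,
        β t = Real.exp (-∫ u in t..T, (σ ^ 2 * α u + a))) ∧
      (∀ t ∈ Set.Icc t₀ (T - τ),
        β t = Real.exp (-∫ u in t..T, (σ ^ 2 * α u + a)) +
          b * ∫ s in t..(T - τ),
            Real.exp (-∫ u in t..s, (σ ^ 2 * α u + a)) * β (s + τ)) :=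
  beta_linear_delayed_system_general a b σ τ t₀ T hb hτ ht₀ α hα
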